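/- arXiv:1804.09411 — 5 statements merged into one kernel-verified Lean document; each statement's English description precedes it below -/
import Mathlib

section
/- (Bounding-disk lemma.) In any stable-matching Voronoi diagram, the set of matched points equals the union of the bounding disks of all the sites: ⋃_{s ∈ S} C(s) = ⋃_{s ∈ S} closedBall(s, r(s)). -/
/-!
Every cell lies in its own bounding disk, which gives one inclusion. Conversely, a point of the
open disk `ball s (r s)` outside `C s` would form a blocking pair with `s` if it were unmatched,
so the open disks consist of matched points. Cells have positive area, hence `r s > 0`, so the
closed disk is the closure of the open one, and the union of the finitely many closed cells is
closed.
-/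

open MeasureTheory Metric

section BoundingRadius

variable {X : Type*}

theorem subset_closedBall_sSup_dist [PseudoMetricSpace X] {C : Set X}
    (hC : Bornology.IsBounded C) (s : X) :
    C ⊆ closedBall s (sSup ((fun q => dist q s) '' C)) := by
  obtain ⟨R, hR⟩ := hC.subset_closedBall s
  have hbdd : BddAbove ((fun q => dist q s) '' C) :=
    ⟨R, by rintro _ ⟨q, hq, rfl⟩; exact hR hq⟩
  exact fun q hq => le_csSup hbdd ⟨q, hq, rfl⟩

theorem sSup_dist_pos_of_measure_ne_zero [MetricSpace X] [MeasurableSpace X]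
    {μ : Measure X} [NullSingletonClass μ] {C : Set X} (hC : Bornology.IsBounded C)
    (hμ : μ C ≠ 0) (s : X) : 0 < sSup ((fun q => dist q s) '' C) := by
  by_contra! hle
  have hsub : C ⊆ {s} := closedBall_zero (x := s) ▸
    (subset_closedBall_sSup_dist hC s).trans (closedBall_subset_closedBall hle)
  exact hμ (measure_mono_null hsub (measure_singleton s))

end BoundingRadius

theorem matched_eq_union_bounding_disks_general
    (S : Finset (EuclideanSpace ℝ (Fin 2)))
    (A : EuclideanSpace ℝ (Fin 2) → ℝ)
    (C : EuclideanSpace ℝ (Fin 2) → Set (EuclideanSpace ℝ (Fin 2)))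
    (r : EuclideanSpace ℝ (Fin 2) → ℝ)
    (hr : ∀ s, r s = sSup ((fun q => dist q s) '' C s))
    (hA : ∀ s ∈ S, 0 < A s)
    (hclosed : ∀ s ∈ S, IsClosed (C s))
    (hbdd : ∀ s ∈ S, Bornology.IsBounded (C s))
    (hvol : ∀ s ∈ S, volume (C s) = ENNReal.ofReal (A s))
    (hstable : ¬ ∃ s ∈ S, ∃ p : EuclideanSpace ℝ (Fin 2),
      p ∉ C s ∧ dist p s < r s ∧
      ((∀ t ∈ S, p ∉ C t) ∨ ∃ t ∈ S, p ∈ C t ∧ dist p s < dist p t))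
    :
    (⋃ s ∈ S, C s) = ⋃ s ∈ S, closedBall s (r s) := by
  push Not at hstable
  have hcell : ∀ s ∈ S, C s ⊆ closedBall s (r s) := fun s hs =>
    hr s ▸ subset_closedBall_sSup_dist (hbdd s hs) s
  have hr_pos : ∀ s ∈ S, 0 < r s := fun s hs =>
    hr s ▸ sSup_dist_pos_of_measure_ne_zero (μ := volume) (hbdd s hs)
      (hvol s hs ▸ (ENNReal.ofReal_pos.mpr (hA s hs)).ne') s
  have hball : ∀ s ∈ S, ball s (r s) ⊆ ⋃ t ∈ S, C t := by
    intro s hs p hp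
    by_cases hps : p ∈ C s
    · exact Set.mem_biUnion hs hps
    · obtain ⟨⟨t, ht, hpt⟩, -⟩ := hstable s hs p hps (mem_ball.mp hp)
      exact Set.mem_biUnion ht hpt
  refine (Set.iUnion₂_mono hcell).antisymm (Set.iUnion₂_subset fun s hs => ?_)
  rw [← closure_ball s (hr_pos s hs).ne', (isClosed_biUnion_finset hclosed).closure_subset_iff]
  exact hball s hs

theorem matched_eq_union_bounding_disks
    (S : Finset (EuclideanSpace ℝ (Fin 2)))
    (A : EuclideanSpace ℝ (Fin 2) → ℝ)
    (C : EuclideanSpace ℝ (Fin 2) → Set (EuclideanSpace ℝ (Fin 2)))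
    (r : EuclideanSpace ℝ (Fin 2) → ℝ)
    (hr : ∀ s, r s = sSup ((fun q => dist q s) '' C s))
    (hA : ∀ s ∈ S, 0 < A s)
    (hclosed : ∀ s ∈ S, IsClosed (C s))
    (hbdd : ∀ s ∈ S, Bornology.IsBounded (C s))
    (hvol : ∀ s ∈ S, volume (C s) = ENNReal.ofReal (A s))
    (hint : ∀ s ∈ S, ∀ t ∈ S, s ≠ t → interior (C s) ∩ interior (C t) = ∅)
    (hstable : ¬ ∃ s ∈ S, ∃ p : EuclideanSpace ℝ (Fin 2),
      p ∉ C s ∧ dist p s < r s ∧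
      ((∀ t ∈ S, p ∉ C t) ∨ ∃ t ∈ S, p ∈ C t ∧ dist p s < dist p t))
    :
    (⋃ s ∈ S, C s) = ⋃ s ∈ S, closedBall s (r s) :=
  matched_eq_union_bounding_disks_general S A C r hr hA hclosed hbdd hvol hstable
end

section
/- (Radius-monotonicity lemma.) In any stable-matching Voronoi diagram, let s and s' be distinct sites with r(s) ≤ r(s'). Then every point p ∈ C(s) with p ∉ C(s') satisfies dist(p, s) ≤ dist(p, s'). -/
open MeasureTheory Metric

theorem dist_le_sSup_image_dist {X : Type*} [PseudoMetricSpace X] {K : Set X}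
    (hK : Bornology.IsBounded K) (x : X) {p : X} (hp : p ∈ K) :
    dist p x ≤ sSup ((fun q => dist q x) '' K) :=
  le_csSup ((LipschitzWith.dist_left x).isBounded_image hK).bddAbove ⟨p, hp, rfl⟩

theorem radius_monotonicity_general
    (S : Finset (EuclideanSpace ℝ (Fin 2)))
    (C : EuclideanSpace ℝ (Fin 2) → Set (EuclideanSpace ℝ (Fin 2)))
    (r : EuclideanSpace ℝ (Fin 2) → ℝ)
    (hr : ∀ s, r s = sSup ((fun q => dist q s) '' C s))
    (hbdd : ∀ s ∈ S, Bornology.IsBounded (C s))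
    (hstable : ¬ ∃ s ∈ S, ∃ p : EuclideanSpace ℝ (Fin 2),
      p ∉ C s ∧ dist p s < r s ∧
      ((∀ t ∈ S, p ∉ C t) ∨ ∃ t ∈ S, p ∈ C t ∧ dist p s < dist p t))
    (s s' : EuclideanSpace ℝ (Fin 2)) (hs : s ∈ S) (hs' : s' ∈ S)
    (hrle : r s ≤ r s')
    (p : EuclideanSpace ℝ (Fin 2)) (hpC : p ∈ C s) (hpNot : p ∉ C s') :
    dist p s ≤ dist p s' := by
  by_contra! hcloser
  have hps : dist p s ≤ r s := hr s ▸ dist_le_sSup_image_dist (hbdd s hs) s hpC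
  exact hstable ⟨s', hs', p, hpNot, hcloser.trans_le (hps.trans hrle),
    Or.inr ⟨s, hs, hpC, hcloser⟩⟩

theorem radius_monotonicity
    (S : Finset (EuclideanSpace ℝ (Fin 2)))
    (A : EuclideanSpace ℝ (Fin 2) → ℝ)
    (C : EuclideanSpace ℝ (Fin 2) → Set (EuclideanSpace ℝ (Fin 2)))
    (r : EuclideanSpace ℝ (Fin 2) → ℝ)
    (hr : ∀ s, r s = sSup ((fun q => dist q s) '' C s))
    (hA : ∀ s ∈ S, 0 < A s)
    (hclosed : ∀ s ∈ S, IsClosed (C s))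
    (hbdd : ∀ s ∈ S, Bornology.IsBounded (C s))
    (hvol : ∀ s ∈ S, volume (C s) = ENNReal.ofReal (A s))
    (hint : ∀ s ∈ S, ∀ t ∈ S, s ≠ t → interior (C s) ∩ interior (C t) = ∅)
    (hstable : ¬ ∃ s ∈ S, ∃ p : EuclideanSpace ℝ (Fin 2),
      p ∉ C s ∧ dist p s < r s ∧
      ((∀ t ∈ S, p ∉ C t) ∨ ∃ t ∈ S, p ∈ C t ∧ dist p s < dist p t))
    (s s' : EuclideanSpace ℝ (Fin 2)) (hs : s ∈ S) (hs' : s' ∈ S) (hne : s ≠ s')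
    (hrle : r s ≤ r s')
    (p : EuclideanSpace ℝ (Fin 2)) (hpC : p ∈ C s) (hpNot : p ∉ C s') :
    dist p s ≤ dist p s' :=
  radius_monotonicity_general S C r hr hbdd hstable s s' hs hs' hrle p hpC hpNot
end

section
/- (Pointwise core of the incremental-construction correctness lemma.) In any stable-matching Voronoi diagram, enumerate the sites as s₁, …, sₙ with nondecreasing bounding radii, i.e., r(s₁) ≤ … ≤ r(sₙ). Fix an index i and a site s ∈ {sᵢ, …, sₙ}. Suppose a point p ∈ ℝ² satisfies: (a) dist(p, s_j) > r(s_j) for every j < i (p lies outside the bounding disks of all earlier sites); (b) dist(p, sᵢ) < r(sᵢ) (p lies strictly inside the bounding disk of sᵢ); and (c) dist(p, s) < dist(p, s_j) for every j ≥ i with s_j ≠ s (s is the strictly nearest site to p among sᵢ, …, sₙ). Then p ∈ C(s). -/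
/-!
The site `s = sites k` has a larger bounding radius than `sites i` and is closer to `p`, so `p`
lies strictly inside the bounding disk of `s`. If `p ∉ C s`, stability forces `p` into some cell
`C t` with `t` at least as close as `s`. Such a `t` cannot be an earlier site, whose cell lies in
its bounding disk and hence away from `p`; and it cannot be a later site other than `s`, which is
strictly farther from `p` than `s`.
-/

open MeasureTheory Metric

section StableMatching

variable {X : Type*} [PseudoMetricSpace X]

theorem dist_le_sSup_image_dist_s6 {C : Set X} (hC : Bornology.IsBounded C) (s : X) {q : X}
    (hq : q ∈ C) : dist q s ≤ sSup ((fun q => dist q s) '' C) := by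
  obtain ⟨R, hR⟩ := hC.subset_closedBall s
  refine le_csSup ⟨R, ?_⟩ ⟨q, hq, rfl⟩
  rintro _ ⟨x, hx, rfl⟩
  exact mem_closedBall.mp (hR hx)

theorem mem_of_not_blocking {S : Finset X} {C : X → Set X} {r : X → ℝ}
    (hstable : ¬ ∃ s ∈ S, ∃ p : X,
      p ∉ C s ∧ dist p s < r s ∧
      ((∀ t ∈ S, p ∉ C t) ∨ ∃ t ∈ S, p ∈ C t ∧ dist p s < dist p t))
    {s p : X} (hs : s ∈ S) (hps : dist p s < r s)
    (hcloser : ∀ t ∈ S, p ∈ C t → t ≠ s → dist p s < dist p t) : p ∈ C s := by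
  by_contra hp
  refine hstable ⟨s, hs, p, hp, hps, or_iff_not_imp_left.mpr fun hmatched => ?_⟩
  push Not at hmatched
  obtain ⟨t, ht, hpt⟩ := hmatched
  exact ⟨t, ht, hpt, hcloser t ht hpt (by rintro rfl; exact hp hpt)⟩

end StableMatching

theorem incremental_pointwise_core_general
    (S : Finset (EuclideanSpace ℝ (Fin 2)))
    (C : EuclideanSpace ℝ (Fin 2) → Set (EuclideanSpace ℝ (Fin 2)))
    (r : EuclideanSpace ℝ (Fin 2) → ℝ)
    (hr : ∀ s, r s = sSup ((fun q => dist q s) '' C s))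
    (hbdd : ∀ s ∈ S, Bornology.IsBounded (C s))
    (hstable : ¬ ∃ s ∈ S, ∃ p : EuclideanSpace ℝ (Fin 2),
      p ∉ C s ∧ dist p s < r s ∧
      ((∀ t ∈ S, p ∉ C t) ∨ ∃ t ∈ S, p ∈ C t ∧ dist p s < dist p t))
    (n : ℕ) (sites : Fin n → EuclideanSpace ℝ (Fin 2))
    (himg : (S : Set (EuclideanSpace ℝ (Fin 2))) = Set.range sites)
    (hmono : ∀ i j : Fin n, i ≤ j → r (sites i) ≤ r (sites j))
    (i k : Fin n) (hik : i ≤ k)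
    (p : EuclideanSpace ℝ (Fin 2))
    (ha : ∀ j : Fin n, j < i → r (sites j) < dist p (sites j))
    (hb : dist p (sites i) < r (sites i))
    (hc : ∀ j : Fin n, i ≤ j → sites j ≠ sites k → dist p (sites k) < dist p (sites j)) :
    p ∈ C (sites k) := by
  have hsites : ∀ j, sites j ∈ S := fun j => by
    rw [← Finset.mem_coe, himg]
    exact ⟨j, rfl⟩
  refine mem_of_not_blocking hstable (hsites k) ?_ ?_
  · by_cases hki : sites k = sites i
    · rwa [hki]
    · calc dist p (sites k) < dist p (sites i) := hc i le_rfl (Ne.symm hki)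
        _ < r (sites i) := hb
        _ ≤ r (sites k) := hmono i k hik
  · intro t ht hpt hne
    obtain ⟨j, rfl⟩ : t ∈ Set.range sites := himg ▸ ht
    refine hc j (not_lt.mp fun hji => (ha j hji).not_ge ?_) hne
    rw [hr]
    exact dist_le_sSup_image_dist_s6 (hbdd _ ht) _ hpt

theorem incremental_pointwise_core
    (S : Finset (EuclideanSpace ℝ (Fin 2)))
    (A : EuclideanSpace ℝ (Fin 2) → ℝ)
    (C : EuclideanSpace ℝ (Fin 2) → Set (EuclideanSpace ℝ (Fin 2)))
    (r : EuclideanSpace ℝ (Fin 2) → ℝ)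
    (hr : ∀ s, r s = sSup ((fun q => dist q s) '' C s))
    (hA : ∀ s ∈ S, 0 < A s)
    (hclosed : ∀ s ∈ S, IsClosed (C s))
    (hbdd : ∀ s ∈ S, Bornology.IsBounded (C s))
    (hvol : ∀ s ∈ S, volume (C s) = ENNReal.ofReal (A s))
    (hint : ∀ s ∈ S, ∀ t ∈ S, s ≠ t → interior (C s) ∩ interior (C t) = ∅)
    (hstable : ¬ ∃ s ∈ S, ∃ p : EuclideanSpace ℝ (Fin 2),
      p ∉ C s ∧ dist p s < r s ∧
      ((∀ t ∈ S, p ∉ C t) ∨ ∃ t ∈ S, p ∈ C t ∧ dist p s < dist p t))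
    (n : ℕ) (sites : Fin n → EuclideanSpace ℝ (Fin 2))
    (hinj : Function.Injective sites)
    (himg : (S : Set (EuclideanSpace ℝ (Fin 2))) = Set.range sites)
    (hmono : ∀ i j : Fin n, i ≤ j → r (sites i) ≤ r (sites j))
    (i k : Fin n) (hik : i ≤ k)
    (p : EuclideanSpace ℝ (Fin 2))
    (ha : ∀ j : Fin n, j < i → r (sites j) < dist p (sites j))
    (hb : dist p (sites i) < r (sites i))
    (hc : ∀ j : Fin n, i ≤ j → sites j ≠ sites k → dist p (sites k) < dist p (sites j)) :
    p ∈ C (sites k) :=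
  incremental_pointwise_core_general S C r hr hbdd hstable n sites himg hmono i k hik p ha hb hc
end

section
/- (Average-degree lemma.) Let G be a finite simple graph in which every vertex has degree 2 or degree 3, and in which no vertex of degree 2 has two distinct neighbors of degree 2. Then the average degree of G is at least 2.25; equivalently, 4·(∑_{v} deg(v)) ≥ 9·(number of vertices of G). In particular, the number of degree-3 vertices is at least one third of the number of degree-2 vertices. -/
/-!
Every vertex of degree 2 has a neighbour of degree 3, since its two neighbours cannot both
have degree 2. A vertex of degree 3 is adjacent to at most three vertices, so double counting
the edges between the two degree classes gives `n₂ ≤ 3 n₃`. As `∑ deg = 2 |V| + n₃` and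
`|V| = n₂ + n₃`, this is the bound `4 ∑ deg ≥ 9 |V|`.
-/

open Finset

namespace SimpleGraph

variable {V : Type*} (G : SimpleGraph V) [Fintype V] [DecidableRel G.Adj]

theorem exists_adj_degree_ne_two_of_two_le_degree {v : V} (hv : 2 ≤ G.degree v)
    (hno : ¬ ∃ u w : V, G.Adj v u ∧ G.Adj v w ∧ u ≠ w ∧ G.degree u = 2 ∧ G.degree w = 2) :
    ∃ u, G.Adj v u ∧ G.degree u ≠ 2 := by
  by_contra! h
  rw [← card_neighborFinset_eq_degree] at hv
  obtain ⟨u, hu, w, hw, huw⟩ := one_lt_card.mp hv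
  rw [mem_neighborFinset] at hu hw
  exact hno ⟨u, w, hu, hw, huw, h u hu, h w hw⟩

theorem card_le_mul_card_of_forall_exists_adj {A B : Finset V} {k : ℕ}
    (hA : ∀ a ∈ A, ∃ b ∈ B, G.Adj a b) (hB : ∀ b ∈ B, G.degree b ≤ k) : #A ≤ k * #B := by
  have hcount := card_mul_le_card_mul (m := 1) (n := k) G.Adj
    (fun a ha ↦ by
      obtain ⟨b, hb, hab⟩ := hA a ha
      exact one_le_card.mpr ⟨b, mem_filter.mpr ⟨hb, hab⟩⟩)
    (fun b hb ↦ (card_le_card fun a ha ↦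
        (G.mem_neighborFinset b a).mpr (mem_filter.mp ha).2.symm).trans
      ((G.card_neighborFinset_eq_degree b).trans_le (hB b hb)))
  rwa [mul_one, mul_comm] at hcount

theorem sum_degree_eq_of_degree_two_or_three (hdeg : ∀ v, G.degree v = 2 ∨ G.degree v = 3) :
    ∑ v, G.degree v = 2 * Fintype.card V + #{v | G.degree v = 3} := by
  calc ∑ v, G.degree v = ∑ v, (2 + if G.degree v = 3 then 1 else 0) :=
        sum_congr rfl fun v _ ↦ by rcases hdeg v with h | h <;> simp [h]
    _ = 2 * Fintype.card V + #{v | G.degree v = 3} := by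
        rw [sum_add_distrib, sum_const, sum_boole, card_univ, smul_eq_mul, mul_comm, Nat.cast_id]

theorem card_degree_two_add_card_degree_three (hdeg : ∀ v, G.degree v = 2 ∨ G.degree v = 3) :
    #{v | G.degree v = 2} + #{v | G.degree v = 3} = Fintype.card V := by
  have hthree : univ.filter (fun v ↦ G.degree v = 3) = univ.filter (fun v ↦ G.degree v ≠ 2) :=
    filter_congr fun v _ ↦ by rcases hdeg v with h | h <;> simp [h]
  rw [hthree, card_filter_add_card_filter_not, card_univ]

end SimpleGraph

theorem average_degree_lemma
    {V : Type*} [Fintype V] (G : SimpleGraph V) [DecidableRel G.Adj]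
    (hdeg : ∀ v : V, G.degree v = 2 ∨ G.degree v = 3)
    (hno : ¬ ∃ v u w : V, G.degree v = 2 ∧ G.Adj v u ∧ G.Adj v w ∧ u ≠ w ∧
      G.degree u = 2 ∧ G.degree w = 2) :
    4 * (∑ v : V, G.degree v) ≥ 9 * Fintype.card V ∧
      3 * (Finset.univ.filter fun v : V => G.degree v = 3).card ≥
        (Finset.univ.filter fun v : V => G.degree v = 2).card := by
  have hnbr : ∀ a ∈ univ.filter (G.degree · = 2), ∃ b ∈ univ.filter (G.degree · = 3),
      G.Adj a b := by
    intro a ha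
    have ha2 : G.degree a = 2 := (mem_filter.mp ha).2
    obtain ⟨b, hab, hb⟩ := G.exists_adj_degree_ne_two_of_two_le_degree ha2.ge
      fun ⟨u, w, h⟩ ↦ hno ⟨a, u, w, ha2, h⟩
    exact ⟨b, mem_filter.mpr ⟨mem_univ b, (hdeg b).resolve_left hb⟩, hab⟩
  have hcount := G.card_le_mul_card_of_forall_exists_adj hnbr
    fun b hb ↦ (mem_filter.mp hb).2.le
  have hsum := G.sum_degree_eq_of_degree_two_or_three hdeg
  have hcard := G.card_degree_two_add_card_degree_three hdeg
  exact ⟨by omega, hcount⟩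
end

section
/- (Annulus–disk intersection lemma.) Fix real numbers ρ and rad with 0 < rad < ρ, and fix a center c ∈ ℝ² with dist(c, 0) = ρ + rad, so that the closed disk D = closedBall(c, rad) is tangent to the circle of radius ρ about the origin and its center lies outside that circle. For ε > 0 let A_ε := {p ∈ ℝ² : ρ ≤ dist(p, 0) ≤ ρ + ε} be the annulus of inner radius ρ and width ε. Then the ratio volume(A_ε ∩ D) / volume(A_ε) tends to 0 as ε tends to 0 from the right (limit along the filter 𝓝[>] 0). -/
/-!
In coordinates `(x, y)` adapted to `c`, a point of the annulus `A_ε` lying in the disk has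
`ρ ≤ x` (the disk stays outside the open ball of radius `ρ`) and `x ≤ ‖p‖ ≤ ρ + ε`, hence
`y² ≤ (ρ + ε)² - ρ² =: w²`. So `A_ε ∩ D` sits in an `ε × 2w` rectangle, while `A_ε` has area
`π w²`; since `w² ≥ 2ρε` the ratio is at most `2ε / (π w) ≤ w / (π ρ)`, and `w → 0`.
-/

open MeasureTheory Metric Filter Set Real

theorem OrthonormalBasis.volume_setOf_repr_mem_Icc {ι F : Type*} [Fintype ι]
    [NormedAddCommGroup F] [InnerProductSpace ℝ F] [FiniteDimensional ℝ F]
    [MeasurableSpace F] [BorelSpace F]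
    (b : OrthonormalBasis ι ℝ F) (a a' : ι → ℝ) :
    volume {p : F | ∀ i, b.repr p i ∈ Icc (a i) (a' i)} = ∏ i, ENNReal.ofReal (a' i - a i) := by
  have h := (PiLp.volume_preserving_ofLp ι).comp b.measurePreserving_repr
  rw [← Real.volume_Icc_pi, ← h.measure_preimage measurableSet_Icc.nullMeasurableSet]
  congr 1
  ext p
  simp [Pi.le_def, forall_and]

theorem exists_orthonormalBasis_apply_eq {ι E : Type*} [Fintype ι]
    [NormedAddCommGroup E] [InnerProductSpace ℝ E] [FiniteDimensional ℝ E]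
    (hcard : Module.finrank ℝ E = Fintype.card ι) (i : ι) {u : E} (hu : ‖u‖ = 1) :
    ∃ b : OrthonormalBasis ι ℝ E, b i = u := by
  have hON : Orthonormal ℝ (({i} : Set ι).domRestrict fun _ => u) :=
    orthonormal_subsingleton_iff.mpr fun _ => hu
  obtain ⟨b, hb⟩ := hON.exists_orthonormalBasis_extension_of_card_eq hcard
  exact ⟨b, hb i rfl⟩

theorem le_inner_of_le_norm_of_dist_smul_le {E : Type*} [NormedAddCommGroup E]
    [InnerProductSpace ℝ E] {u p : E} {ρ r : ℝ} (hu : ‖u‖ = 1) (hρ : 0 ≤ ρ) (hr : 0 < r)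
    (hp : ρ ≤ ‖p‖) (hpc : dist p ((ρ + r) • u) ≤ r) :
    ρ ≤ inner ℝ u p := by
  have hsq : ‖p - (ρ + r) • u‖ ^ 2 ≤ r ^ 2 := by
    rw [← dist_eq_norm]
    exact pow_le_pow_left₀ dist_nonneg hpc 2
  rw [norm_sub_sq_real, inner_smul_right, real_inner_comm, norm_smul, hu,
    Real.norm_of_nonneg (by positivity)] at hsq
  nlinarith [pow_le_pow_left₀ hρ hp 2]

theorem EuclideanSpace.volume_annulus_fin_two (x : EuclideanSpace ℝ (Fin 2)) {ρ ε : ℝ}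
    (hρ : 0 ≤ ρ) (hε : 0 ≤ ε) :
    volume {p : EuclideanSpace ℝ (Fin 2) | ρ ≤ dist p x ∧ dist p x ≤ ρ + ε} =
      ENNReal.ofReal (π * ((ρ + ε) ^ 2 - ρ ^ 2)) := by
  have hset : {p | ρ ≤ dist p x ∧ dist p x ≤ ρ + ε} = closedBall x (ρ + ε) \ ball x ρ := by
    ext p
    simp [and_comm]
  have hsub : ball x ρ ⊆ closedBall x (ρ + ε) :=
    ball_subset_closedBall.trans (closedBall_subset_closedBall (by linarith))
  rw [hset, measure_sdiff hsub measurableSet_ball.nullMeasurableSet measure_ball_lt_top.ne,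
    EuclideanSpace.volume_closedBall_fin_two, EuclideanSpace.volume_ball_fin_two,
    ← ENNReal.ofReal_pow (by positivity), ← ENNReal.ofReal_pow hρ,
    ← ENNReal.sub_mul fun _ _ => ENNReal.ofReal_ne_top,
    ← ENNReal.ofReal_sub _ (by positivity), ← ENNReal.ofReal_mul (by nlinarith), mul_comm]

theorem annulus_inter_closedBall_subset {E : Type*} [NormedAddCommGroup E]
    [InnerProductSpace ℝ E] (b : OrthonormalBasis (Fin 2) ℝ E) {ρ r ε : ℝ} (hρ : 0 ≤ ρ)
    (hr : 0 < r) :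
    {p : E | ρ ≤ dist p 0 ∧ dist p 0 ≤ ρ + ε} ∩ closedBall ((ρ + r) • b 0) r ⊆
      {p | ∀ i, b.repr p i ∈
        Icc (![ρ, -√((ρ + ε) ^ 2 - ρ ^ 2)] i) (![ρ + ε, √((ρ + ε) ^ 2 - ρ ^ 2)] i)} := by
  rintro p ⟨⟨hp, hpε⟩, hpc⟩
  rw [dist_zero_right] at hp hpε
  have hx : ρ ≤ b.repr p 0 := by
    rw [b.repr_apply_apply]
    exact le_inner_of_le_norm_of_dist_smul_le (b.norm_eq_one 0) hρ hr hp hpc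
  have hnorm : b.repr p 0 ^ 2 + b.repr p 1 ^ 2 = ‖p‖ ^ 2 := by
    rw [← b.repr.norm_map, EuclideanSpace.norm_sq_eq, Fin.sum_univ_two, Real.norm_eq_abs,
      Real.norm_eq_abs, sq_abs, sq_abs]
  have hy : |b.repr p 1| ≤ √((ρ + ε) ^ 2 - ρ ^ 2) :=
    Real.abs_le_sqrt (by nlinarith [pow_le_pow_left₀ (norm_nonneg p) hpε 2])
  have hx_le : b.repr p 0 ≤ ‖p‖ := by
    simpa [b.repr_apply_apply, b.norm_eq_one] using real_inner_le_norm (b 0) p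
  exact Fin.forall_fin_two.mpr ⟨⟨hx, hx_le.trans hpε⟩, abs_le.mp hy⟩

theorem volume_annulus_inter_closedBall_le {c : EuclideanSpace ℝ (Fin 2)} {ρ r ε : ℝ}
    (hρ : 0 ≤ ρ) (hr : 0 < r) (hε : 0 ≤ ε) (hc : dist c 0 = ρ + r) :
    volume ({p | ρ ≤ dist p 0 ∧ dist p 0 ≤ ρ + ε} ∩ closedBall c r) ≤
      ENNReal.ofReal (2 * ε * √((ρ + ε) ^ 2 - ρ ^ 2)) := by
  have hρr : ρ + r ≠ 0 := by positivity
  have hu : ‖(ρ + r)⁻¹ • c‖ = 1 := by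
    rw [norm_smul, ← dist_zero_right c, hc, norm_inv, Real.norm_of_nonneg (by positivity),
      inv_mul_cancel₀ hρr]
  obtain ⟨b, hb⟩ := exists_orthonormalBasis_apply_eq (by simp) (0 : Fin 2) hu
  have hcb : c = (ρ + r) • b 0 := by rw [hb, smul_inv_smul₀ hρr]
  calc _ ≤ _ := measure_mono (hcb ▸ annulus_inter_closedBall_subset b hρ hr)
    _ = _ := by
      rw [b.volume_setOf_repr_mem_Icc, Fin.prod_univ_two, ← ENNReal.ofReal_mul (by simpa)]
      congr 1
      simp only [Matrix.cons_val_zero, Matrix.cons_val_one, Matrix.cons_val_fin_one]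
      ring

theorem volume_annulus_inter_closedBall_div_le {c : EuclideanSpace ℝ (Fin 2)} {ρ r ε : ℝ}
    (hρ : 0 < ρ) (hr : 0 < r) (hε : 0 < ε) (hc : dist c 0 = ρ + r) :
    volume ({p | ρ ≤ dist p 0 ∧ dist p 0 ≤ ρ + ε} ∩ closedBall c r) /
        volume {p : EuclideanSpace ℝ (Fin 2) | ρ ≤ dist p 0 ∧ dist p 0 ≤ ρ + ε} ≤
      ENNReal.ofReal (√((ρ + ε) ^ 2 - ρ ^ 2) / (π * ρ)) := by
  rw [EuclideanSpace.volume_annulus_fin_two 0 hρ.le hε.le]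
  refine ENNReal.div_le_of_le_mul
    ((volume_annulus_inter_closedBall_le hρ.le hr hε.le hc).trans ?_)
  rw [← ENNReal.ofReal_mul (by positivity)]
  apply ENNReal.ofReal_le_ofReal
  rw [div_mul_eq_mul_div, le_div_iff₀ (by positivity)]
  have hchord : 2 * ε * ρ ≤ (ρ + ε) ^ 2 - ρ ^ 2 := by nlinarith
  nlinarith [mul_le_mul_of_nonneg_left hchord
    (mul_nonneg (Real.sqrt_nonneg ((ρ + ε) ^ 2 - ρ ^ 2)) pi_pos.le)]

theorem annulus_disk_intersection_ratio
    (ρ rad : ℝ) (hrad : 0 < rad) (hρ : rad < ρ)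
    (c : EuclideanSpace ℝ (Fin 2)) (hc : dist c 0 = ρ + rad) :
    Tendsto
      (fun ε : ℝ =>
        volume ({p : EuclideanSpace ℝ (Fin 2) | ρ ≤ dist p 0 ∧ dist p 0 ≤ ρ + ε} ∩
            closedBall c rad) /
          volume {p : EuclideanSpace ℝ (Fin 2) | ρ ≤ dist p 0 ∧ dist p 0 ≤ ρ + ε})
      (nhdsWithin 0 (Set.Ioi 0)) (nhds 0) := by
  have hbound : Tendsto (fun ε : ℝ => ENNReal.ofReal (√((ρ + ε) ^ 2 - ρ ^ 2) / (π * ρ)))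
      (nhdsWithin 0 (Ioi 0)) (nhds 0) := by
    have hcont : Continuous fun ε : ℝ => √((ρ + ε) ^ 2 - ρ ^ 2) / (π * ρ) := by fun_prop
    simpa using (ENNReal.tendsto_ofReal (hcont.tendsto 0)).mono_left nhdsWithin_le_nhds
  refine tendsto_of_tendsto_of_tendsto_of_le_of_le' tendsto_const_nhds hbound
    (Eventually.of_forall fun _ => zero_le) ?_
  filter_upwards [self_mem_nhdsWithin] with ε hε
  exact volume_annulus_inter_closedBall_div_le (hrad.trans hρ) hrad hε hc
end
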